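/- arXiv:2501.15213 — 4 statements merged into one kernel-verified Lean document; each statement's English description precedes it below -/
import Mathlib

section
/- The map (sigma, m) -> sigma{m} := (sigma')^{-1} m + ((C D')_0 ; (A B')_0) defines an action of Sp(g, F_2) on F_2^{2g}, i.e. (sigma tau){m} = sigma{tau{m}} for all sigma, tau in Sp(g, F_2) and m in F_2^{2g}. -/
open Matrix BigOperators

/-- A characteristic: a vector in `F₂^{2g}`, indexed by `Fin g ⊕ Fin g`
(the first block is `a`, the second is `b`). -/
abbrev Char2 (g : ℕ) := (Fin g ⊕ Fin g) → ZMod 2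

/-- The `a`-part of a characteristic. -/
def aPart {g : ℕ} (m : Char2 g) : Fin g → ZMod 2 := fun i => m (Sum.inl i)

/-- The `b`-part of a characteristic. -/
def bPart {g : ℕ} (m : Char2 g) : Fin g → ZMod 2 := fun i => m (Sum.inr i)

/-- A characteristic `m = (a;b)` is even if `a'b = 0`. -/
def IsEvenChar {g : ℕ} (m : Char2 g) : Prop := aPart m ⬝ᵥ bPart m = 0

/-- A characteristic `m = (a;b)` is odd if `a'b = 1`. -/
def IsOddChar {g : ℕ} (m : Char2 g) : Prop := aPart m ⬝ᵥ bPart m = 1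

instance {g : ℕ} : DecidablePred (IsEvenChar (g := g)) := fun m => by
  unfold IsEvenChar; infer_instance

instance {g : ℕ} : DecidablePred (IsOddChar (g := g)) := fun m => by
  unfold IsOddChar; infer_instance

/-- The type of `2g × 2g` matrices over `F₂`. -/
abbrev SpMat (g : ℕ) := Matrix (Fin g ⊕ Fin g) (Fin g ⊕ Fin g) (ZMod 2)

/-- The offset `((CD')₀ ; (AB')₀)` appearing in the affine action. -/
def offVec {g : ℕ} (σ : SpMat g) : Char2 g :=
  Sum.elim (Matrix.diag (σ.toBlocks₂₁ * (σ.toBlocks₂₂)ᵀ))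
           (Matrix.diag (σ.toBlocks₁₁ * (σ.toBlocks₁₂)ᵀ))

/-- The affine action `σ{m} = (σ')⁻¹ m + ((CD')₀ ; (AB')₀)`. -/
noncomputable def affAct {g : ℕ} (σ : SpMat g) (m : Char2 g) : Char2 g :=
  (σᵀ)⁻¹ *ᵥ m + offVec σ

/-- The sign `(-1)^x` for `x : F₂`. -/
def sgn2 (x : ZMod 2) : ℤ := if x = 0 then 1 else -1

/-- The quadratic form `M[x] = x' M x`. -/
def quadF {g : ℕ} (M : Matrix (Fin g) (Fin g) (ZMod 2)) (x : Fin g → ZMod 2) : ZMod 2 :=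
  x ⬝ᵥ (M *ᵥ x)

/-- `ε_m(σ) = (-1)^{tr(B'C) + (B'D)[a] + (A'C)[b]}`. -/
def epsChar {g : ℕ} (m : Char2 g) (σ : SpMat g) : ℤ :=
  sgn2 (Matrix.trace ((σ.toBlocks₁₂)ᵀ * σ.toBlocks₂₁)
    + quadF ((σ.toBlocks₁₂)ᵀ * σ.toBlocks₂₂) (aPart m)
    + quadF ((σ.toBlocks₁₁)ᵀ * σ.toBlocks₂₁) (bPart m))

/-- The symplectic pairing `<m,n> = a'β + b'α`. -/
def pairing {g : ℕ} (m n : Char2 g) : ZMod 2 :=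
  aPart m ⬝ᵥ bPart n + bPart m ⬝ᵥ aPart n

/-- `e(m,n) = (-1)^{<m,n>}`. -/
def eSign {g : ℕ} (m n : Char2 g) : ℤ := sgn2 (pairing m n)

/-! Write `K = (0 I; 0 0)` (`halfJ`), so that `J = Kᵀ - K`, and over `F₂` the offset is the
block-swapped diagonal of `σ K σᵀ`, i.e. `offVec σ = J · diag (σ K σᵀ)`. For `τ` symplectic,
`τ K τᵀ - K` is symmetric, and for a symmetric `S` over `F₂` the quadratic form `x ↦ xᵀ S x` is
additive (the cross terms come in equal pairs), whence `xᵀ S x = diag S · x` because `x² = x`;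
thus `diag (C S Cᵀ) = C · diag S`. Writing `στ K (στ)ᵀ = σ K σᵀ + σ (τ K τᵀ - K) σᵀ` gives the
cocycle identity `offVec (στ) = (σᵀ)⁻¹ offVec τ + offVec σ`, using `(σᵀ)⁻¹ = -J σ J`. -/

namespace Matrix

section CharTwo

variable {n R : Type*} [Fintype n] [CommRing R] [CharP R 2]

lemma dotProduct_mulVec_add_self {S : Matrix n n R} (hS : S.IsSymm) (x y : n → R) :
    (x + y) ⬝ᵥ S *ᵥ (x + y) = x ⬝ᵥ S *ᵥ x + y ⬝ᵥ S *ᵥ y := by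
  have hswap : y ⬝ᵥ S *ᵥ x = x ⬝ᵥ S *ᵥ y := by
    rw [dotProduct_mulVec, ← mulVec_transpose, hS.eq, dotProduct_comm]
  rw [add_dotProduct, mulVec_add, dotProduct_add, dotProduct_add, hswap]
  linear_combination CharTwo.add_self_eq_zero (x ⬝ᵥ S *ᵥ y)

lemma dotProduct_mulVec_self_eq_sum [DecidableEq n] {S : Matrix n n R} (hS : S.IsSymm)
    (x : n → R) : x ⬝ᵥ S *ᵥ x = ∑ i, S i i * x i ^ 2 := by
  let Q : (n → R) →+ R :=
    AddMonoidHom.mk' (fun v ↦ v ⬝ᵥ S *ᵥ v) (dotProduct_mulVec_add_self hS)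
  calc x ⬝ᵥ S *ᵥ x = Q (∑ i, Pi.single i (x i)) := by rw [Finset.univ_sum_single]; rfl
    _ = ∑ i, S i i * x i ^ 2 := by
      rw [map_sum]
      refine Finset.sum_congr rfl fun i _ ↦ ?_
      simp [Q, mulVec_single, single_dotProduct]
      ring

end CharTwo

section ZModTwo

variable {m n : Type*} [Fintype n] [DecidableEq n]

lemma dotProduct_mulVec_self_eq_diag_dotProduct {S : Matrix n n (ZMod 2)} (hS : S.IsSymm)
    (x : n → ZMod 2) : x ⬝ᵥ S *ᵥ x = S.diag ⬝ᵥ x := by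
  rw [dotProduct_mulVec_self_eq_sum hS]
  simp [dotProduct, ZMod.pow_card]

lemma diag_mul_mul_transpose {S : Matrix n n (ZMod 2)} (hS : S.IsSymm)
    (C : Matrix m n (ZMod 2)) : (C * S * Cᵀ).diag = C *ᵥ S.diag := by
  funext i
  have hentry : (C * S * Cᵀ) i i = C i ⬝ᵥ S *ᵥ C i := by rw [Matrix.mul_assoc]; rfl
  rw [diag_apply, hentry, dotProduct_mulVec_self_eq_diag_dotProduct hS, dotProduct_comm]
  rfl

end ZModTwo

section HalfJ

variable (l R : Type*) [DecidableEq l] [CommRing R]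

def halfJ : Matrix (l ⊕ l) (l ⊕ l) R :=
  fromBlocks 0 1 0 0

lemma transpose_halfJ_sub_halfJ : (halfJ l R)ᵀ - halfJ l R = J l R := by
  ext (i | i) (j | j) <;> simp [halfJ, J, one_apply, eq_comm]

lemma diag_halfJ : (halfJ l R).diag = 0 := by
  ext (i | i) <;> simp [halfJ]

variable {l R} [Fintype l]

lemma isSymm_mul_halfJ_mul_transpose_sub_halfJ {τ : Matrix (l ⊕ l) (l ⊕ l) R}
    (hτ : τ ∈ symplecticGroup l R) : (τ * halfJ l R * τᵀ - halfJ l R).IsSymm := by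
  have hskew : (τ * halfJ l R * τᵀ)ᵀ - τ * halfJ l R * τᵀ = (halfJ l R)ᵀ - halfJ l R := by
    rw [transpose_halfJ_sub_halfJ, ← SymplecticGroup.mem_iff.mp hτ,
      ← transpose_halfJ_sub_halfJ]
    simp only [transpose_mul, transpose_transpose, Matrix.mul_sub, Matrix.sub_mul,
      Matrix.mul_assoc]
  rw [IsSymm, transpose_sub, sub_eq_sub_iff_sub_eq_sub]
  exact hskew

lemma diag_mul_mul_halfJ_mul_transpose_mul {σ τ : Matrix (l ⊕ l) (l ⊕ l) (ZMod 2)}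
    (hτ : τ ∈ symplecticGroup l (ZMod 2)) :
    (σ * τ * halfJ l (ZMod 2) * (σ * τ)ᵀ).diag
      = (σ * halfJ l (ZMod 2) * σᵀ).diag + σ *ᵥ (τ * halfJ l (ZMod 2) * τᵀ).diag := by
  set K := halfJ l (ZMod 2)
  have hsplit : σ * τ * K * (σ * τ)ᵀ = σ * K * σᵀ + σ * (τ * K * τᵀ - K) * σᵀ := by
    simp only [transpose_mul, Matrix.mul_sub, Matrix.sub_mul, Matrix.mul_assoc]
    abel
  rw [hsplit, diag_add, diag_mul_mul_transpose (isSymm_mul_halfJ_mul_transpose_sub_halfJ hτ),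
    diag_sub, diag_halfJ, sub_zero]

end HalfJ

end Matrix

lemma offVec_eq_J_mulVec_diag {g : ℕ} (σ : SpMat g) :
    offVec σ = J (Fin g) (ZMod 2) *ᵥ (σ * halfJ (Fin g) (ZMod 2) * σᵀ).diag := by
  conv_rhs => rw [← fromBlocks_toBlocks σ]
  ext (i | i) <;> simp [offVec, halfJ, J, fromBlocks_multiply, fromBlocks_transpose,
    fromBlocks_mulVec, neg_mulVec, CharTwo.neg_eq]

lemma offVec_mul {g : ℕ} {σ τ : SpMat g} (hσ : σ ∈ symplecticGroup (Fin g) (ZMod 2))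
    (hτ : τ ∈ symplecticGroup (Fin g) (ZMod 2)) :
    offVec (σ * τ) = (σᵀ)⁻¹ *ᵥ offVec τ + offVec σ := by
  have hinv : (σᵀ)⁻¹ = -J (Fin g) (ZMod 2) * σ * J (Fin g) (ZMod 2) := by
    rw [SymplecticGroup.inv_eq_symplectic_inv _ (SymplecticGroup.transpose_mem hσ),
      transpose_transpose]
  rw [offVec_eq_J_mulVec_diag, offVec_eq_J_mulVec_diag, offVec_eq_J_mulVec_diag,
    diag_mul_mul_halfJ_mul_transpose_mul hτ, mulVec_add, add_comm, hinv, mulVec_mulVec,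
    mulVec_mulVec, Matrix.mul_assoc _ (J _ _), J_squared]
  simp

/-- the map `(σ, m) ↦ σ{m}` defines an action of `Sp(g, F₂)` on
`F₂^{2g}`: one has `(στ){m} = σ{τ{m}}`. -/
theorem affine_action_is_action (g : ℕ) (σ τ : SpMat g)
    (hσ : σ ∈ Matrix.symplecticGroup (Fin g) (ZMod 2))
    (hτ : τ ∈ Matrix.symplecticGroup (Fin g) (ZMod 2)) (m : Char2 g) :
    affAct (σ * τ) m = affAct σ (affAct τ m) := by
  rw [affAct, affAct, affAct, transpose_mul, Matrix.mul_inv_rev, ← mulVec_mulVec,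
    offVec_mul hσ hτ, mulVec_add, add_assoc]
end

section
/- The group Sp(g, F_2) acts doubly transitively on the set of even characteristics under the affine action sigma{m}, i.e. for any two ordered pairs of distinct even characteristics (m1, m2) and (n1, n2) there exists sigma in Sp(g, F_2) with sigma{m1} = n1 and sigma{m2} = n2. -/
open Matrix BigOperators

section scratch
variable {g : ℕ}

lemma z2_neg (x : ZMod 2) : -x = x := by revert x; decide
lemma z2_addself (x : ZMod 2) : x + x = 0 := by revert x; decide
lemma z2_mulself (x : ZMod 2) : x * x = x := by revert x; decide

lemma J_eq : Matrix.J (Fin g) (ZMod 2) = Matrix.fromBlocks 0 1 1 0 := by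
  rw [Matrix.J]
  have h : (-1 : Matrix (Fin g) (Fin g) (ZMod 2)) = 1 := by
    ext i j
    rw [Matrix.neg_apply, z2_neg]
  rw [h]

lemma sum2_symm {n : ℕ} (f : Fin n → Fin n → ZMod 2) (hf : ∀ j k, f j k = f k j) :
    (∑ j, ∑ k, f j k) = ∑ j, f j j := by
  rw [← Finset.sum_product' (s := Finset.univ) (t := Finset.univ)]
  rw [← Finset.diag_union_offDiag, Finset.sum_union (Finset.disjoint_diag_offDiag _)]
  rw [Finset.sum_diag]
  have h0 : ∑ p ∈ Finset.univ.offDiag, f p.1 p.2 = 0 := by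
    refine Finset.sum_involution (fun p _ => Prod.swap p) ?_ ?_ ?_ ?_
    · intro a ha; rw [hf]; exact z2_addself _
    · intro a ha _
      simp only [Finset.mem_offDiag] at ha
      intro h
      exact ha.2.2 (congrArg Prod.snd h)
    · intro a ha; simp only [Finset.mem_offDiag] at ha ⊢; exact ⟨ha.2.1, ha.1, Ne.symm ha.2.2⟩
    · intro a ha; rfl
  rw [h0, add_zero]

end scratch

section part2
variable {g : ℕ}

local notation "Mg" => Matrix (Fin g) (Fin g) (ZMod 2)

/-- In char 2, `x ⬝ (M x) = diag M ⬝ x` for symmetric `M`. -/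
lemma quad_symm (M : Mg) (hM : Mᵀ = M) (y : Fin g → ZMod 2) :
    y ⬝ᵥ (M *ᵥ y) = Matrix.diag M ⬝ᵥ y := by
  have : y ⬝ᵥ (M *ᵥ y) = ∑ j, ∑ k, y j * M j k * y k := by
    simp only [dotProduct, Matrix.mulVec, dotProduct, Finset.mul_sum, mul_assoc]
  rw [this, sum2_symm]
  · simp only [Matrix.diag, dotProduct]
    apply Finset.sum_congr rfl
    intro j _
    have : M j j * (y j * y j) = M j j * y j := by rw [z2_mulself]
    calc y j * M j j * y j = M j j * (y j * y j) := by ring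
    _ = M j j * y j := this
  · intro j k
    have hm : M j k = M k j := by
      conv_lhs => rw [← hM]
      exact Matrix.transpose_apply M j k
    rw [hm]; ring

/-- diag of `X M Xᵀ` for symmetric `M`, char 2. -/
lemma diag_conj (X M : Mg) (hM : Mᵀ = M) :
    Matrix.diag (X * M * Xᵀ) = X *ᵥ Matrix.diag M := by
  funext i
  have h1 : Matrix.diag (X * M * Xᵀ) i = (fun k => X i k) ⬝ᵥ (M *ᵥ fun k => X i k) := by
    simp only [Matrix.diag, Matrix.mul_apply, Matrix.transpose_apply, dotProduct, Matrix.mulVec,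
      dotProduct, Finset.sum_mul, Finset.mul_sum]
    rw [Finset.sum_comm]
    apply Finset.sum_congr rfl; intro k _
    apply Finset.sum_congr rfl; intro j _
    ring
  rw [h1, quad_symm M hM]
  simp only [dotProduct, Matrix.mulVec, dotProduct]
  apply Finset.sum_congr rfl; intro j _; ring

end part2



namespace DTaux
variable {g : ℕ}

local notation "Jg" => Matrix.J (Fin g) (ZMod 2)
local notation "Sp" => Matrix.symplecticGroup (Fin g) (ZMod 2)

lemma neg_mat {α β : Type*} (M : Matrix α β (ZMod 2)) : -M = M := by
  ext i j; rw [Matrix.neg_apply, z2_neg]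

lemma J_sq : Jg * Jg = (1 : SpMat g) := by rw [Matrix.J_squared, neg_mat]

lemma transpose_inv_eq {σ : SpMat g} (hσ : σ ∈ Sp) : (σᵀ)⁻¹ = Jg * σ * Jg := by
  rw [SymplecticGroup.mem_iff] at hσ
  refine Matrix.inv_eq_left_inv ?_
  calc Jg * σ * Jg * σᵀ = Jg * (σ * Jg * σᵀ) := by noncomm_ring
  _ = Jg * Jg := by rw [hσ]
  _ = 1 := J_sq

lemma elim_parts (m : Char2 g) : Sum.elim (aPart m) (bPart m) = m := by
  funext x; cases x <;> rfl

lemma aPart_elim (x y : Fin g → ZMod 2) : aPart (Sum.elim x y) = x := rfl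
lemma bPart_elim (x y : Fin g → ZMod 2) : bPart (Sum.elim x y) = y := rfl

lemma JσJ (A B C D : Matrix (Fin g) (Fin g) (ZMod 2)) :
    Jg * Matrix.fromBlocks A B C D * Jg = Matrix.fromBlocks D C B A := by
  rw [J_eq, Matrix.fromBlocks_multiply, Matrix.fromBlocks_multiply]
  simp only [Matrix.zero_mul, Matrix.one_mul, Matrix.mul_zero, Matrix.mul_one,
    zero_add, add_zero]

lemma affAct_fromBlocks {A B C D : Matrix (Fin g) (Fin g) (ZMod 2)}
    (h : Matrix.fromBlocks A B C D ∈ Sp) (m : Char2 g) :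
    affAct (Matrix.fromBlocks A B C D) m =
      Sum.elim (D *ᵥ aPart m + C *ᵥ bPart m + Matrix.diag (C * Dᵀ))
               (B *ᵥ aPart m + A *ᵥ bPart m + Matrix.diag (A * Bᵀ)) := by
  rw [affAct, transpose_inv_eq h, JσJ]
  conv_lhs => rw [← elim_parts m]
  rw [Matrix.fromBlocks_mulVec]
  funext x
  cases x <;>
    simp [offVec, Matrix.toBlocks_fromBlocks₁₁, Matrix.toBlocks_fromBlocks₁₂,
      Matrix.toBlocks_fromBlocks₂₁, Matrix.toBlocks_fromBlocks₂₂, aPart, bPart, add_assoc]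

end DTaux

namespace DTaux
variable {g : ℕ}
local notation "Jg" => Matrix.J (Fin g) (ZMod 2)
local notation "Sp" => Matrix.symplecticGroup (Fin g) (ZMod 2)

lemma mat_addself (M : Matrix (Fin g) (Fin g) (ZMod 2)) : M + M = 0 := by
  ext i j; rw [Matrix.add_apply, z2_addself, Matrix.zero_apply]

/-- key diagonal identity -/
lemma key_diag (C D P Q R S : Matrix (Fin g) (Fin g) (ZMod 2))
    (h1 : (P * Qᵀ)ᵀ = P * Qᵀ) (h2 : (R * Sᵀ)ᵀ = R * Sᵀ) (h3 : P * Sᵀ = 1 + Q * Rᵀ) :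
    Matrix.diag ((C * P + D * R) * (C * Q + D * S)ᵀ) =
      C *ᵥ Matrix.diag (P * Qᵀ) + D *ᵥ Matrix.diag (R * Sᵀ) + Matrix.diag (C * Dᵀ) := by
  have expand : (C * P + D * R) * (C * Q + D * S)ᵀ =
      C * (P * Qᵀ) * Cᵀ + (C * ((P * Sᵀ) * Dᵀ) + D * ((R * Qᵀ) * Cᵀ)) + D * (R * Sᵀ) * Dᵀ := by
    rw [Matrix.transpose_add, Matrix.transpose_mul, Matrix.transpose_mul]
    noncomm_ring
  rw [expand]
  rw [Matrix.diag_add, Matrix.diag_add]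
  rw [diag_conj C _ h1, diag_conj D _ h2]
  have hmid : Matrix.diag (C * (P * Sᵀ * Dᵀ) + D * (R * Qᵀ * Cᵀ)) = Matrix.diag (C * Dᵀ) := by
    have ht : D * (R * Qᵀ * Cᵀ) = (C * (Q * Rᵀ * Dᵀ))ᵀ := by
      simp only [Matrix.transpose_mul, Matrix.transpose_transpose]
      noncomm_ring
    rw [Matrix.diag_add, ht, Matrix.diag_transpose]
    have : Matrix.diag (C * (P * Sᵀ * Dᵀ)) + Matrix.diag (C * (Q * Rᵀ * Dᵀ)) =
        Matrix.diag (C * (P * Sᵀ * Dᵀ) + C * (Q * Rᵀ * Dᵀ)) := (Matrix.diag_add _ _).symm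
    rw [this, ← Matrix.mul_add, ← Matrix.add_mul, h3]
    have : (1 + Q * Rᵀ + Q * Rᵀ : Matrix (Fin g) (Fin g) (ZMod 2)) = 1 := by
      rw [add_assoc, mat_addself, add_zero]
    rw [this, Matrix.one_mul]
  rw [hmid]
  abel

lemma sp_rel {σ : SpMat g} (hσ : σ ∈ Sp) :
    (σ.toBlocks₁₁ * (σ.toBlocks₁₂)ᵀ)ᵀ = σ.toBlocks₁₁ * (σ.toBlocks₁₂)ᵀ ∧
    (σ.toBlocks₂₁ * (σ.toBlocks₂₂)ᵀ)ᵀ = σ.toBlocks₂₁ * (σ.toBlocks₂₂)ᵀ ∧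
    σ.toBlocks₁₁ * (σ.toBlocks₂₂)ᵀ = 1 + σ.toBlocks₁₂ * (σ.toBlocks₂₁)ᵀ := by
  set P := σ.toBlocks₁₁; set Q := σ.toBlocks₁₂; set R := σ.toBlocks₂₁; set S := σ.toBlocks₂₂
  rw [SymplecticGroup.mem_iff] at hσ
  have hb : σ = Matrix.fromBlocks P Q R S := (Matrix.fromBlocks_toBlocks σ).symm
  rw [hb, J_eq, Matrix.fromBlocks_transpose, Matrix.fromBlocks_multiply,
    Matrix.fromBlocks_multiply] at hσ
  simp only [Matrix.mul_zero, Matrix.mul_one, zero_add, add_zero,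
    Matrix.zero_mul, Matrix.one_mul, zero_add, add_zero] at hσ
  have e11 := congrArg Matrix.toBlocks₁₁ hσ
  have e12 := congrArg Matrix.toBlocks₁₂ hσ
  have e22 := congrArg Matrix.toBlocks₂₂ hσ
  simp only [Matrix.toBlocks_fromBlocks₁₁, Matrix.toBlocks_fromBlocks₁₂,
    Matrix.toBlocks_fromBlocks₂₂] at e11 e12 e22
  refine ⟨?_, ?_, ?_⟩
  · rw [Matrix.transpose_mul, Matrix.transpose_transpose]
    have h := e11
    rw [add_eq_zero_iff_eq_neg, neg_mat] at h
    exact h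
  · rw [Matrix.transpose_mul, Matrix.transpose_transpose]
    have h := e22
    rw [add_eq_zero_iff_eq_neg, neg_mat] at h
    exact h
  · calc P * Sᵀ = P * Sᵀ + (Q * Rᵀ + Q * Rᵀ) := by rw [mat_addself, add_zero]
    _ = (Q * Rᵀ + P * Sᵀ) + Q * Rᵀ := by abel
    _ = 1 + Q * Rᵀ := by rw [e12]

end DTaux

namespace DTaux
variable {g : ℕ}
local notation "Jg" => Matrix.J (Fin g) (ZMod 2)
local notation "Sp" => Matrix.symplecticGroup (Fin g) (ZMod 2)

lemma offVec_fromBlocks (A B C D : Matrix (Fin g) (Fin g) (ZMod 2)) :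
    offVec (Matrix.fromBlocks A B C D) =
      Sum.elim (Matrix.diag (C * Dᵀ)) (Matrix.diag (A * Bᵀ)) := by
  simp [offVec, Matrix.toBlocks_fromBlocks₁₁, Matrix.toBlocks_fromBlocks₁₂,
    Matrix.toBlocks_fromBlocks₂₁, Matrix.toBlocks_fromBlocks₂₂]

lemma off_mul {σ τ : SpMat g} (hσ : σ ∈ Sp) (hτ : τ ∈ Sp) :
    offVec (σ * τ) = (σᵀ)⁻¹ *ᵥ offVec τ + offVec σ := by
  obtain ⟨h1, h2, h3⟩ := sp_rel hτ
  set A := σ.toBlocks₁₁; set B := σ.toBlocks₁₂; set C := σ.toBlocks₂₁; set D := σ.toBlocks₂₂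
  set P := τ.toBlocks₁₁; set Q := τ.toBlocks₁₂; set R := τ.toBlocks₂₁; set S := τ.toBlocks₂₂
  have hbσ : σ = Matrix.fromBlocks A B C D := (Matrix.fromBlocks_toBlocks σ).symm
  have hbτ : τ = Matrix.fromBlocks P Q R S := (Matrix.fromBlocks_toBlocks τ).symm
  rw [transpose_inv_eq hσ]
  rw [hbσ, hbτ, JσJ, Matrix.fromBlocks_multiply, offVec_fromBlocks, offVec_fromBlocks,
    offVec_fromBlocks, Matrix.fromBlocks_mulVec]
  rw [key_diag C D P Q R S h1 h2 h3, key_diag A B P Q R S h1 h2 h3]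
  funext x
  cases x <;> simp <;> abel

lemma affAct_one (m : Char2 g) : affAct 1 m = m := by
  rw [affAct, Matrix.transpose_one, inv_one, Matrix.one_mulVec]
  have : offVec (1 : SpMat g) = 0 := by
    rw [show (1 : SpMat g) = Matrix.fromBlocks 1 0 0 1 from (Matrix.fromBlocks_one).symm,
      offVec_fromBlocks]
    funext x; cases x <;> simp
  rw [this, add_zero]

lemma affAct_mul {σ τ : SpMat g} (hσ : σ ∈ Sp) (hτ : τ ∈ Sp) (m : Char2 g) :
    affAct (σ * τ) m = affAct σ (affAct τ m) := by
  rw [affAct, affAct, affAct, Matrix.mulVec_add, mulVec_mulVec]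
  rw [Matrix.transpose_mul, Matrix.mul_inv_rev, off_mul hσ hτ]
  abel

lemma inv_mem {σ : SpMat g} (hσ : σ ∈ Sp) : σ⁻¹ ∈ Sp := by
  rw [SymplecticGroup.inv_eq_symplectic_inv σ hσ]
  exact Submonoid.mul_mem _ (Submonoid.mul_mem _
    (SymplecticGroup.neg_mem (SymplecticGroup.J_mem _ _)) (SymplecticGroup.transpose_mem hσ))
    (SymplecticGroup.J_mem _ _)

lemma affAct_inv_affAct {σ : SpMat g} (hσ : σ ∈ Sp) (m : Char2 g) :
    affAct σ⁻¹ (affAct σ m) = m := by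
  rw [← affAct_mul (inv_mem hσ) hσ, Matrix.nonsing_inv_mul σ (SymplecticGroup.symplectic_det hσ),
    affAct_one]

lemma affAct_injective {σ : SpMat g} (hσ : σ ∈ Sp) {m m' : Char2 g}
    (h : affAct σ m = affAct σ m') : m = m' := by
  have := congrArg (affAct σ⁻¹) h
  rwa [affAct_inv_affAct hσ, affAct_inv_affAct hσ] at this

/-- Reachability of ordered pairs under the affine symplectic action. -/
def Reach (p q : Char2 g × Char2 g) : Prop :=
  ∃ σ ∈ Sp, affAct σ p.1 = q.1 ∧ affAct σ p.2 = q.2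

lemma Reach.refl (p : Char2 g × Char2 g) : Reach p p :=
  ⟨1, Submonoid.one_mem _, affAct_one _, affAct_one _⟩

lemma Reach.trans {p q r : Char2 g × Char2 g} (h1 : Reach p q) (h2 : Reach q r) : Reach p r := by
  obtain ⟨τ, hτ, hτ1, hτ2⟩ := h1
  obtain ⟨σ, hσ, hσ1, hσ2⟩ := h2
  exact ⟨σ * τ, Submonoid.mul_mem _ hσ hτ, by rw [affAct_mul hσ hτ, hτ1, hσ1],
    by rw [affAct_mul hσ hτ, hτ2, hσ2]⟩

lemma Reach.symm {p q : Char2 g × Char2 g} (h : Reach p q) : Reach q p := by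
  obtain ⟨σ, hσ, h1, h2⟩ := h
  exact ⟨σ⁻¹, inv_mem hσ, by rw [← h1, affAct_inv_affAct hσ],
    by rw [← h2, affAct_inv_affAct hσ]⟩

end DTaux

namespace DTaux
variable {g : ℕ}
local notation "Jg" => Matrix.J (Fin g) (ZMod 2)
local notation "Sp" => Matrix.symplecticGroup (Fin g) (ZMod 2)

lemma genU_mem {S : Matrix (Fin g) (Fin g) (ZMod 2)} (hS : Sᵀ = S) :
    Matrix.fromBlocks 1 S 0 1 ∈ Sp := by
  rw [SymplecticGroup.mem_iff, J_eq, Matrix.fromBlocks_transpose, Matrix.fromBlocks_multiply,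
    Matrix.fromBlocks_multiply, Matrix.transpose_one, Matrix.transpose_zero, hS]
  simp only [Matrix.mul_one, Matrix.one_mul, Matrix.mul_zero, Matrix.zero_mul, add_zero, zero_add]
  rw [mat_addself]

lemma genL_mem {S : Matrix (Fin g) (Fin g) (ZMod 2)} (hS : Sᵀ = S) :
    Matrix.fromBlocks 1 0 S 1 ∈ Sp := by
  rw [SymplecticGroup.mem_iff, J_eq, Matrix.fromBlocks_transpose, Matrix.fromBlocks_multiply,
    Matrix.fromBlocks_multiply, Matrix.transpose_one, Matrix.transpose_zero, hS]
  simp only [Matrix.mul_one, Matrix.one_mul, Matrix.mul_zero, Matrix.zero_mul, add_zero, zero_add]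
  rw [mat_addself]

lemma genG_mem {V : Matrix (Fin g) (Fin g) (ZMod 2)} (hV : V * V = 1) :
    Matrix.fromBlocks Vᵀ 0 0 V ∈ Sp := by
  rw [SymplecticGroup.mem_iff, J_eq, Matrix.fromBlocks_transpose, Matrix.fromBlocks_multiply,
    Matrix.fromBlocks_multiply, Matrix.transpose_zero]
  simp only [Matrix.mul_one, Matrix.one_mul, Matrix.mul_zero, Matrix.zero_mul, add_zero, zero_add,
    Matrix.transpose_transpose]
  rw [← Matrix.transpose_mul, hV, Matrix.transpose_one]

lemma genU_act {S : Matrix (Fin g) (Fin g) (ZMod 2)} (hS : Sᵀ = S) (m : Char2 g) :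
    affAct (Matrix.fromBlocks 1 S 0 1) m =
      Sum.elim (aPart m) (S *ᵥ aPart m + bPart m + Matrix.diag S) := by
  rw [affAct_fromBlocks (genU_mem hS)]
  funext x
  cases x <;> simp [hS]

lemma genL_act {S : Matrix (Fin g) (Fin g) (ZMod 2)} (hS : Sᵀ = S) (m : Char2 g) :
    affAct (Matrix.fromBlocks 1 0 S 1) m =
      Sum.elim (aPart m + S *ᵥ bPart m + Matrix.diag S) (bPart m) := by
  rw [affAct_fromBlocks (genL_mem hS)]
  funext x
  cases x <;> simp [add_comm]

lemma genJ_act (m : Char2 g) :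
    affAct (Matrix.fromBlocks 0 1 1 0 : SpMat g) m = Sum.elim (bPart m) (aPart m) := by
  rw [affAct_fromBlocks (J_eq ▸ SymplecticGroup.J_mem (Fin g) (ZMod 2))]
  funext x
  cases x <;> simp

lemma genG_act {V : Matrix (Fin g) (Fin g) (ZMod 2)} (hV : V * V = 1) (m : Char2 g) :
    affAct (Matrix.fromBlocks Vᵀ 0 0 V) m = Sum.elim (V *ᵥ aPart m) (Vᵀ *ᵥ bPart m) := by
  rw [affAct_fromBlocks (genG_mem hV)]
  funext x
  cases x <;> simp

lemma evU {S : Matrix (Fin g) (Fin g) (ZMod 2)} (hS : Sᵀ = S) {m : Char2 g}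
    (hm : IsEvenChar m) :
    IsEvenChar (Sum.elim (aPart m) (S *ᵥ aPart m + bPart m + Matrix.diag S) : Char2 g) := by
  unfold IsEvenChar at *
  rw [aPart_elim, bPart_elim, dotProduct_add, dotProduct_add, quad_symm S hS, hm,
    dotProduct_comm _ (Matrix.diag S)]
  rw [add_zero, z2_addself]

lemma evL {S : Matrix (Fin g) (Fin g) (ZMod 2)} (hS : Sᵀ = S) {m : Char2 g}
    (hm : IsEvenChar m) :
    IsEvenChar (Sum.elim (aPart m + S *ᵥ bPart m + Matrix.diag S) (bPart m) : Char2 g) := by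
  unfold IsEvenChar at *
  rw [aPart_elim, bPart_elim, add_dotProduct, add_dotProduct, hm,
    dotProduct_comm (S *ᵥ bPart m), quad_symm S hS,
    dotProduct_comm (Matrix.diag S)]
  rw [zero_add, z2_addself]

lemma evJ {m : Char2 g} (hm : IsEvenChar m) :
    IsEvenChar (Sum.elim (bPart m) (aPart m) : Char2 g) := by
  unfold IsEvenChar at *
  rw [aPart_elim, bPart_elim, dotProduct_comm]
  exact hm

lemma evG {V : Matrix (Fin g) (Fin g) (ZMod 2)} (hV : V * V = 1) {m : Char2 g}
    (hm : IsEvenChar m) :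
    IsEvenChar (Sum.elim (V *ᵥ aPart m) (Vᵀ *ᵥ bPart m) : Char2 g) := by
  unfold IsEvenChar at *
  rw [aPart_elim, bPart_elim, Matrix.dotProduct_mulVec, Matrix.vecMul_transpose,
    mulVec_mulVec, hV, Matrix.one_mulVec]
  exact hm

end DTaux

namespace DTaux
variable {g : ℕ}
local notation "Sp" => Matrix.symplecticGroup (Fin g) (ZMod 2)

lemma z2_eq_one {x : ZMod 2} (h : x ≠ 0) : x = 1 := by revert x; decide
lemma z2_eq_zero {x : ZMod 2} (h : x ≠ 1) : x = 0 := by revert x; decide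

/-- The standard basis vector. -/
def ev (i : Fin g) : Fin g → ZMod 2 := Pi.single i 1

lemma ev_self (i : Fin g) : ev i i = 1 := by simp [ev]
lemma ev_ne {i j : Fin g} (h : j ≠ i) : ev i j = 0 := by simp [ev, Pi.single_eq_of_ne h]
lemma ev_dot (i : Fin g) (x : Fin g → ZMod 2) : ev i ⬝ᵥ x = x i := by
  rw [ev, single_dotProduct, one_mul]
lemma dot_ev (i : Fin g) (x : Fin g → ZMod 2) : x ⬝ᵥ ev i = x i := by
  rw [ev, dotProduct_single, mul_one]
lemma ev_nonzero (i : Fin g) : (ev i : Fin g → ZMod 2) ≠ 0 := by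
  intro h
  have := congrFun h i
  rw [ev_self] at this
  exact one_ne_zero this

/-- Existence of symmetric `S` with zero diagonal and `S a = b`, given `a i = 1`, `a⬝b = 0`. -/
lemma exists_S {a b : Fin g → ZMod 2} {i : Fin g} (hi : a i = 1) (hab : a ⬝ᵥ b = 0) :
    ∃ S : Matrix (Fin g) (Fin g) (ZMod 2), Sᵀ = S ∧ Matrix.diag S = 0 ∧ S *ᵥ a = b := by
  refine ⟨Matrix.of fun j k => ev i j * b k + b j * ev i k, ?_, ?_, ?_⟩
  · ext j k
    simp only [Matrix.transpose_apply, Matrix.of_apply]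
    ring
  · funext j
    simp only [Matrix.diag, Matrix.of_apply, Pi.zero_apply]
    rw [mul_comm, z2_addself]
  · funext j
    have h1 : (Matrix.of (fun j k => ev i j * b k + b j * ev i k) *ᵥ a) j
        = ev i j * (b ⬝ᵥ a) + b j * (ev i ⬝ᵥ a) := by
      simp only [Matrix.mulVec, dotProduct, Matrix.of_apply, add_mul,
        Finset.sum_add_distrib, Finset.mul_sum, mul_assoc]
    rw [h1, dotProduct_comm b a, hab, ev_dot, hi]
    ring

/-- Existence of an involution `V` with `V a = e_{i₀}` for nonzero `a`. -/
lemma exists_V {a : Fin g → ZMod 2} (ha : a ≠ 0) (i₀ : Fin g) :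
    ∃ V : Matrix (Fin g) (Fin g) (ZMod 2), V * V = 1 ∧ V *ᵥ a = ev i₀ := by
  obtain ⟨i₁, hi₁⟩ : ∃ i, a i ≠ 0 := by
    by_contra h
    push_neg at h
    exact ha (funext fun i => h i)
  have hi₁' : a i₁ = 1 := z2_eq_one hi₁
  obtain ⟨w, hw1, hw2⟩ : ∃ w : Fin g → ZMod 2, w ⬝ᵥ a = 1 ∧ w i₀ = 1 := by
    by_cases h0 : a i₀ = 1
    · exact ⟨ev i₀, by rw [ev_dot, h0], ev_self i₀⟩
    · have hne : i₀ ≠ i₁ := fun h => h0 (h ▸ hi₁')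
      refine ⟨ev i₀ + ev i₁, ?_, ?_⟩
      · rw [add_dotProduct, ev_dot, ev_dot, z2_eq_zero h0, hi₁', zero_add]
      · rw [Pi.add_apply, ev_self, ev_ne hne, add_zero]
  refine ⟨1 + Matrix.of (fun j k => (a + ev i₀) j * w k), ?_, ?_⟩
  · have hwu : w ⬝ᵥ (a + ev i₀) = 0 := by
      rw [dotProduct_add, hw1, dot_ev, hw2, z2_addself]
    have hWW : Matrix.of (fun j k => (a + ev i₀) j * w k) *
        Matrix.of (fun j k => (a + ev i₀) j * w k) = 0 := by
      ext j l
      rw [Matrix.mul_apply, Matrix.zero_apply]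
      have hterm : ∀ k, (Matrix.of (fun j k => (a + ev i₀) j * w k)) j k *
          (Matrix.of (fun j k => (a + ev i₀) j * w k)) k l
          = (a + ev i₀) j * w l * (w k * (a + ev i₀) k) := by
        intro k; simp only [Matrix.of_apply]; ring
      rw [Finset.sum_congr rfl (fun k _ => hterm k), ← Finset.mul_sum]
      have : ∑ k, w k * (a + ev i₀) k = w ⬝ᵥ (a + ev i₀) := rfl
      rw [this, hwu, mul_zero]
    have hexp : (1 + Matrix.of (fun j k => (a + ev i₀) j * w k)) *
        (1 + Matrix.of (fun j k => (a + ev i₀) j * w k)) =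
        1 + (Matrix.of (fun j k => (a + ev i₀) j * w k) +
          Matrix.of (fun j k => (a + ev i₀) j * w k)) +
        Matrix.of (fun j k => (a + ev i₀) j * w k) *
          Matrix.of (fun j k => (a + ev i₀) j * w k) := by noncomm_ring
    rw [hexp, hWW, mat_addself, add_zero, add_zero]
  · have hWmul : Matrix.of (fun j k => (a + ev i₀) j * w k) *ᵥ a
        = fun j => (a + ev i₀) j * (w ⬝ᵥ a) := by
      funext j
      simp only [Matrix.mulVec, dotProduct, Matrix.of_apply, Finset.mul_sum, mul_assoc]
    rw [Matrix.add_mulVec, Matrix.one_mulVec, hWmul, hw1]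
    funext j
    simp only [Pi.add_apply, mul_one]
    rw [← add_assoc, z2_addself, zero_add]

end DTaux

namespace DTaux
variable {g : ℕ}
local notation "Sp" => Matrix.symplecticGroup (Fin g) (ZMod 2)

lemma vec_addself (x : Fin g → ZMod 2) : x + x = 0 := by
  funext j; rw [Pi.add_apply, z2_addself, Pi.zero_apply]

lemma aPart_zero : aPart (0 : Char2 g) = 0 := rfl
lemma bPart_zero : bPart (0 : Char2 g) = 0 := rfl

lemma elim_zero : (Sum.elim (0 : Fin g → ZMod 2) 0 : Char2 g) = 0 := by
  funext x; cases x <;> rfl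

lemma char_ext {m : Char2 g} (h1 : aPart m = 0) (h2 : bPart m = 0) : m = 0 := by
  funext x
  cases x with
  | inl i => exact congrFun h1 i
  | inr i => exact congrFun h2 i

lemma genJ_mem : (Matrix.fromBlocks 0 1 1 0 : SpMat g) ∈ Sp :=
  J_eq ▸ SymplecticGroup.J_mem (Fin g) (ZMod 2)

lemma phase1' (m₁ m₂ : Char2 g) (h₁ : IsEvenChar m₁) (h₂ : IsEvenChar m₂)
    (hA : aPart m₁ ≠ 0) :
    ∃ q : Char2 g, Reach (m₁, m₂) (0, q) ∧ IsEvenChar q := by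
  obtain ⟨i, hi0⟩ : ∃ i, aPart m₁ i ≠ 0 := by
    by_contra h
    push_neg at h
    exact hA (funext fun i => h i)
  obtain ⟨S, hS, hd0, hSa⟩ := exists_S (z2_eq_one hi0) h₁
  have r1 : Reach (m₁, m₂)
      (Sum.elim (aPart m₁) 0,
       Sum.elim (aPart m₂) (S *ᵥ aPart m₂ + bPart m₂ + Matrix.diag S)) := by
    refine ⟨_, genU_mem hS, ?_, genU_act hS m₂⟩
    rw [genU_act hS m₁, hSa, hd0, add_zero, vec_addself]
  set D : Matrix (Fin g) (Fin g) (ZMod 2) := Matrix.diagonal (aPart m₁) with hDdef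
  have hD : Dᵀ = D := Matrix.diagonal_transpose _
  set q₁ : Char2 g := Sum.elim (aPart m₂) (S *ᵥ aPart m₂ + bPart m₂ + Matrix.diag S) with hq₁
  have r2 : Reach (Sum.elim (aPart m₁) 0, q₁)
      (0, Sum.elim (aPart q₁ + D *ᵥ bPart q₁ + Matrix.diag D) (bPart q₁)) := by
    refine ⟨_, genL_mem hD, ?_, genL_act hD q₁⟩
    rw [genL_act hD]
    rw [aPart_elim, bPart_elim, Matrix.mulVec_zero, add_zero, hDdef, Matrix.diag_diagonal,
      vec_addself, elim_zero]
  refine ⟨_, r1.trans r2, evL hD ?_⟩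
  exact evU hS h₂

lemma phase1 (m₁ m₂ : Char2 g) (h₁ : IsEvenChar m₁) (h₂ : IsEvenChar m₂) :
    ∃ q : Char2 g, Reach (m₁, m₂) (0, q) ∧ IsEvenChar q := by
  by_cases hA : aPart m₁ = 0
  · by_cases hB : bPart m₁ = 0
    · refine ⟨m₂, ?_, h₂⟩
      rw [char_ext hA hB]
      exact Reach.refl _
    · have r0 : Reach (m₁, m₂)
          (Sum.elim (bPart m₁) (aPart m₁), Sum.elim (bPart m₂) (aPart m₂)) :=
        ⟨_, genJ_mem, genJ_act m₁, genJ_act m₂⟩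
      obtain ⟨q, r, hq⟩ := phase1' (Sum.elim (bPart m₁) (aPart m₁))
        (Sum.elim (bPart m₂) (aPart m₂)) (evJ h₁) (evJ h₂)
        (by rw [aPart_elim]; exact hB)
      exact ⟨q, r0.trans r, hq⟩
  · exact phase1' m₁ m₂ h₁ h₂ hA

lemma phase2' {c : Fin g → ZMod 2} (hc : c ≠ 0) (i₀ : Fin g) :
    Reach ((0 : Char2 g), Sum.elim c 0) (0, Sum.elim (ev i₀) 0) := by
  obtain ⟨V, hVV, hVa⟩ := exists_V hc i₀
  refine ⟨_, genG_mem hVV, ?_, ?_⟩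
  · rw [genG_act hVV, aPart_zero, bPart_zero, Matrix.mulVec_zero, Matrix.mulVec_zero, elim_zero]
  · rw [genG_act hVV, aPart_elim, bPart_elim, Matrix.mulVec_zero, hVa]

lemma phase2 (i₀ : Fin g) (q : Char2 g) (hq : IsEvenChar q) (hq0 : q ≠ 0) :
    Reach ((0 : Char2 g), q) (0, Sum.elim (ev i₀) 0) := by
  by_cases hA : aPart q = 0
  · have hB : bPart q ≠ 0 := fun h => hq0 (char_ext hA h)
    have r0 : Reach ((0 : Char2 g), q) (0, Sum.elim (bPart q) (aPart q)) := by
      refine ⟨_, genJ_mem, ?_, genJ_act q⟩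
      rw [genJ_act, aPart_zero, bPart_zero, elim_zero]
    rw [hA] at r0
    exact r0.trans (phase2' hB i₀)
  · obtain ⟨i, hi0⟩ : ∃ i, aPart q i ≠ 0 := by
      by_contra h
      push_neg at h
      exact hA (funext fun i => h i)
    obtain ⟨S, hS, hd0, hSa⟩ := exists_S (z2_eq_one hi0) hq
    have r1 : Reach ((0 : Char2 g), q) (0, Sum.elim (aPart q) 0) := by
      refine ⟨_, genU_mem hS, ?_, ?_⟩
      · rw [genU_act hS, aPart_zero, bPart_zero, Matrix.mulVec_zero, hd0, add_zero, add_zero,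
          elim_zero]
      · rw [genU_act hS, hSa, hd0, add_zero, vec_addself]
    exact r1.trans (phase2' hA i₀)

lemma to_canonical (i₀ : Fin g) (m₁ m₂ : Char2 g) (h₁ : IsEvenChar m₁) (h₂ : IsEvenChar m₂)
    (hne : m₁ ≠ m₂) : Reach (m₁, m₂) (0, Sum.elim (ev i₀) 0) := by
  obtain ⟨q, r, hq⟩ := phase1 m₁ m₂ h₁ h₂
  have hq0 : q ≠ 0 := by
    intro h
    obtain ⟨σ, hσ, e1, e2⟩ := r
    exact hne (affAct_injective hσ (e1.trans (h ▸ e2).symm))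
  exact r.trans (phase2 i₀ q hq hq0)

end DTaux


/-- `Sp(g, F₂)` acts doubly transitively on the even
characteristics. -/
theorem doubly_transitive_on_even (g : ℕ) (m₁ m₂ n₁ n₂ : Char2 g)
    (hm₁ : IsEvenChar m₁) (hm₂ : IsEvenChar m₂) (hn₁ : IsEvenChar n₁)
    (hn₂ : IsEvenChar n₂) (hm : m₁ ≠ m₂) (hn : n₁ ≠ n₂) :
    ∃ σ ∈ Matrix.symplecticGroup (Fin g) (ZMod 2),
      affAct σ m₁ = n₁ ∧ affAct σ m₂ = n₂ := by
  have hne : Nonempty (Fin g) := by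
    by_contra h
    apply hm
    funext x
    cases x with
    | inl i => exact absurd ⟨i⟩ h
    | inr i => exact absurd ⟨i⟩ h
  obtain ⟨i₀⟩ := hne
  have r1 := DTaux.to_canonical i₀ m₁ m₂ hm₁ hm₂ hm
  have r2 := DTaux.to_canonical i₀ n₁ n₂ hn₁ hn₂ hn
  obtain ⟨σ, hσ, e1, e2⟩ := r1.trans r2.symm
  exact ⟨σ, hσ, e1, e2⟩
end

section
/- For each fixed characteristic m, the restriction of epsilon_m to the stabilizer H(m) = {sigma in Sp(g,F_2) : sigma{m} = m} is a group homomorphism H(m) -> {±1}, and it is non-trivial. -/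
open Matrix BigOperators

/-!
Write `q(x) = a'b` for `x = (a; b)`. For symplectic `σ`, the `m`-dependent part
`(B'D)[a] + (A'C)[b]` of the exponent of `ε_m(σ)` equals `q(σ'⁻¹ m) + q(m)`; since `B'D` and
`A'C` are symmetric, and over `F₂` a symmetric quadratic form is the linear form given by its
diagonal, this part is moreover linear in `m`. Together with a block computation of
`tr(B'C)` for a product, this gives the cocycle identity `ε_m(στ) = ε_{τ{m}}(σ) ε_m(τ)`, hence
multiplicativity on `H(m)`.

For non-triviality take the symplectic transvection along `v = (u; w)`: it fixes `m` as soon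
as `u'a + w'b + u'w = 1`, and then `ε_m = -1` on it. For `g ≥ 1` such a `v` is found among
`(eᵢ; 0)`, `(0; eᵢ)`, `(eᵢ; eᵢ)`.
-/

section CharTwo

variable {R : Type*} [CommRing R] [CharP R 2]

theorem CharTwo.sum_sum_eq_sum_diag_of_symm {n : Type*} [Fintype n] (t : n → n → R)
    (ht : ∀ i j, t i j = t j i) : ∑ i, ∑ j, t i j = ∑ i, t i i := by
  classical
  have hoff : ∑ p ∈ (Finset.univ : Finset n).offDiag, t p.1 p.2 = 0 :=
    Finset.sum_involution (fun p _ => p.swap)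
      (fun p _ => by rw [Prod.fst_swap, Prod.snd_swap, ht, CharTwo.add_self_eq_zero])
      (fun p hp _ h => (Finset.mem_offDiag.1 hp).2.2 (congrArg Prod.snd h))
      (fun p hp => by simpa [eq_comm, and_comm] using hp) (fun p _ => p.swap_swap)
  rw [← Finset.sum_product', ← Finset.diag_union_offDiag,
    Finset.sum_union (Finset.disjoint_diag_offDiag _), hoff, add_zero, Finset.sum_diag]

variable {m n : Type*}

theorem Matrix.trace_mul_eq_diag_dotProduct_of_charTwo [Fintype n] {S T : Matrix n n R}
    (hS : S.IsSymm) (hT : T.IsSymm) : trace (S * T) = diag S ⬝ᵥ diag T :=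
  CharTwo.sum_sum_eq_sum_diag_of_symm (fun i j => S i j * T j i)
    (fun i j => by rw [hS.apply, hT.apply])

theorem Matrix.neg_eq_self_of_charTwo (M : Matrix m n R) : -M = M := by
  ext; exact CharTwo.neg_eq _

theorem Matrix.add_self_eq_zero_of_charTwo (M : Matrix m n R) : M + M = 0 := by
  ext; exact CharTwo.add_self_eq_zero _

theorem Matrix.add_add_self_eq_of_charTwo (M N : Matrix m n R) : M + (M + N) = N := by
  rw [← add_assoc, add_self_eq_zero_of_charTwo, zero_add]

end CharTwo

theorem Matrix.exists_eq_fromBlocks {R l m n o : Type*} (M : Matrix (n ⊕ o) (l ⊕ m) R) :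
    ∃ A B C D, M = fromBlocks A B C D :=
  ⟨_, _, _, _, (fromBlocks_toBlocks M).symm⟩

theorem exists_eq_sum_elim {R n o : Type*} (x : n ⊕ o → R) : ∃ a b, x = Sum.elim a b :=
  ⟨_, _, (Sum.elim_comp_inl_inr x).symm⟩

theorem Matrix.mulVec_dotProduct_mulVec {R m n : Type*} [CommSemiring R] [Fintype m]
    [Fintype n] (M N : Matrix m n R) (x y : n → R) :
    (M *ᵥ x) ⬝ᵥ (N *ᵥ y) = x ⬝ᵥ ((Mᵀ * N) *ᵥ y) := by
  rw [← mulVec_mulVec, mulVec_transpose, dotProduct_comm x, ← dotProduct_mulVec, dotProduct_comm]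

section Symplectic

variable {R : Type*} [CommRing R] [CharP R 2] {l : Type*} [Fintype l] [DecidableEq l]
  {A B C D : Matrix l l R}

theorem Matrix.fromBlocks_mem_symplecticGroup_iff_of_charTwo :
    fromBlocks A B C D ∈ symplecticGroup l R ↔
      (Aᵀ * C).IsSymm ∧ (Bᵀ * D).IsSymm ∧ Aᵀ * D + Cᵀ * B = 1 := by
  simp only [SymplecticGroup.fromBlocks_mem_iff, IsSymm, transpose_mul, transpose_transpose,
    sub_eq_add_neg, neg_eq_self_of_charTwo, eq_comm (a := Cᵀ * A), eq_comm (a := Dᵀ * B)]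

theorem Matrix.fromBlocks_mem_symplecticGroup_iff_of_charTwo' :
    fromBlocks A B C D ∈ symplecticGroup l R ↔
      (A * Bᵀ).IsSymm ∧ (C * Dᵀ).IsSymm ∧ A * Dᵀ + B * Cᵀ = 1 := by
  rw [← SymplecticGroup.transpose_mem_iff, fromBlocks_transpose,
    fromBlocks_mem_symplecticGroup_iff_of_charTwo]
  simp only [transpose_transpose]

theorem Matrix.inv_transpose_fromBlocks_of_charTwo
    (h : fromBlocks A B C D ∈ symplecticGroup l R) :
    (fromBlocks A B C D)ᵀ⁻¹ = fromBlocks D C B A := by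
  rw [SymplecticGroup.inv_eq_symplectic_inv _ (SymplecticGroup.transpose_mem h),
    transpose_transpose, J]
  simp [fromBlocks_multiply, neg_eq_self_of_charTwo]

theorem Matrix.trace_transpose_mul_add_mul_of_charTwo {A₁ B₁ C₁ D₁ : Matrix l l R}
    (h : Aᵀ * D + Cᵀ * B = 1) (h₁ : A₁ * D₁ᵀ + B₁ * C₁ᵀ = 1) :
    trace ((A * B₁ + B * D₁)ᵀ * (C * A₁ + D * C₁)) =
      trace (Bᵀ * C) + trace (B₁ᵀ * C₁) + trace (Aᵀ * C * (A₁ * B₁ᵀ))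
        + trace (Bᵀ * D * (C₁ * D₁ᵀ)) := by
  have hAD : Aᵀ * D = 1 + Cᵀ * B := by
    rw [eq_sub_of_add_eq h, sub_eq_add_neg, neg_eq_self_of_charTwo]
  have e₁ : trace (B₁ᵀ * (Aᵀ * (C * A₁))) = trace (Aᵀ * (C * (A₁ * B₁ᵀ))) := by
    rw [trace_mul_comm]; simp only [Matrix.mul_assoc]
  have e₂ : trace (B₁ᵀ * (Aᵀ * (D * C₁))) =
      trace (B₁ᵀ * C₁) + trace (Bᵀ * (C * (B₁ * C₁ᵀ))) := by
    rw [← Matrix.mul_assoc Aᵀ, hAD, Matrix.add_mul, Matrix.one_mul, Matrix.mul_add, trace_add,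
      ← trace_transpose (B₁ᵀ * (Cᵀ * B * C₁))]
    simp only [transpose_mul, transpose_transpose, Matrix.mul_assoc]
    rw [trace_mul_comm C₁ᵀ]; simp only [Matrix.mul_assoc]
  have e₃ : trace (D₁ᵀ * (Bᵀ * (C * A₁))) = trace (Bᵀ * (C * (A₁ * D₁ᵀ))) := by
    rw [trace_mul_comm]; simp only [Matrix.mul_assoc]
  have e₄ : trace (D₁ᵀ * (Bᵀ * (D * C₁))) = trace (Bᵀ * (D * (C₁ * D₁ᵀ))) := by
    rw [trace_mul_comm]; simp only [Matrix.mul_assoc]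
  have e₅ : trace (Bᵀ * (C * (B₁ * C₁ᵀ))) + trace (Bᵀ * (C * (A₁ * D₁ᵀ))) = trace (Bᵀ * C) := by
    rw [← trace_add, ← Matrix.mul_add, ← Matrix.mul_add, add_comm, h₁, Matrix.mul_one]
  simp only [transpose_add, transpose_mul, Matrix.add_mul, Matrix.mul_add, trace_add,
    Matrix.mul_assoc]
  rw [e₁, e₂, e₃, e₄]
  linear_combination e₅

end Symplectic

section Transvection

variable {R : Type*} [CommRing R] {n : Type*} [Fintype n] [DecidableEq n]

/-- In characteristic two, this is the symplectic transvection
`x ↦ x + ⟨x, v⟩ v` along `v = (u; w)`. -/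
def symplecticTransvection (u w : n → R) : Matrix (n ⊕ n) (n ⊕ n) R :=
  fromBlocks (1 + vecMulVec u w) (vecMulVec u u) (vecMulVec w w) (1 + vecMulVec w u)

theorem symplecticTransvection_mulVec_elim (u w a b : n → R) :
    symplecticTransvection u w *ᵥ Sum.elim a b =
      Sum.elim (a + (w ⬝ᵥ a + u ⬝ᵥ b) • u) (b + (w ⬝ᵥ a + u ⬝ᵥ b) • w) := by
  simp only [symplecticTransvection, fromBlocks_mulVec, Sum.elim_comp_inl, Sum.elim_comp_inr,
    add_mulVec, one_mulVec, vecMulVec_mulVec, op_smul_eq_smul, add_smul]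
  abel_nf

variable [CharP R 2]

theorem symplecticTransvection_mem (u w : n → R) :
    symplecticTransvection u w ∈ symplecticGroup n R := by
  rw [symplecticTransvection, fromBlocks_mem_symplecticGroup_iff_of_charTwo]
  simp only [IsSymm, transpose_add, transpose_one, transpose_vecMulVec, Matrix.add_mul,
    Matrix.mul_add, Matrix.one_mul, Matrix.mul_one, vecMulVec_mul_vecMulVec, vecMulVec_smul,
    transpose_smul, dotProduct_comm w u, add_assoc, add_self_eq_zero_of_charTwo,
    add_add_self_eq_of_charTwo, add_zero, and_self]

theorem inv_transpose_symplecticTransvection (u w : n → R) :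
    (symplecticTransvection u w)ᵀ⁻¹ = symplecticTransvection w u :=
  inv_transpose_fromBlocks_of_charTwo (symplecticTransvection_mem u w)

end Transvection

theorem ZMod.mul_self_eq_self_mod_two (a : ZMod 2) : a * a = a := by decide +revert

theorem sgn2_add (x y : ZMod 2) : sgn2 (x + y) = sgn2 x * sgn2 y := by decide +revert

theorem sgn2_eq_one_or_eq_neg_one (x : ZMod 2) : sgn2 x = 1 ∨ sgn2 x = -1 := by
  decide +revert

section Characteristics

variable {g : ℕ}

@[simp] theorem aPart_elim (a b : Fin g → ZMod 2) : aPart (Sum.elim a b) = a := rfl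

@[simp] theorem bPart_elim (a b : Fin g → ZMod 2) : bPart (Sum.elim a b) = b := rfl

theorem quadF_transpose (M : Matrix (Fin g) (Fin g) (ZMod 2)) (x : Fin g → ZMod 2) :
    quadF Mᵀ x = quadF M x := by
  rw [quadF, quadF, dotProduct_mulVec, vecMul_transpose, dotProduct_comm]

theorem quadF_of_isSymm {S : Matrix (Fin g) (Fin g) (ZMod 2)} (hS : S.IsSymm)
    (x : Fin g → ZMod 2) : quadF S x = diag S ⬝ᵥ x := by
  simp only [quadF, dotProduct, mulVec, Finset.mul_sum]
  rw [CharTwo.sum_sum_eq_sum_diag_of_symm _ fun i j => by rw [hS.apply]; ring]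
  simp only [mul_left_comm (x _), ZMod.mul_self_eq_self_mod_two, diag_apply, mul_comm (x _)]

def charParity (m : Char2 g) : ZMod 2 := aPart m ⬝ᵥ bPart m

def epsLinearPart (σ : SpMat g) (m : Char2 g) : ZMod 2 :=
  quadF (σ.toBlocks₁₂ᵀ * σ.toBlocks₂₂) (aPart m) + quadF (σ.toBlocks₁₁ᵀ * σ.toBlocks₂₁) (bPart m)

theorem epsChar_eq_sgn2 (m : Char2 g) (σ : SpMat g) :
    epsChar m σ = sgn2 (trace (σ.toBlocks₁₂ᵀ * σ.toBlocks₂₁) + epsLinearPart σ m) := by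
  rw [epsChar, epsLinearPart, add_assoc]

variable {σ τ : SpMat g}

theorem epsLinearPart_eq_charParity (hσ : σ ∈ symplecticGroup (Fin g) (ZMod 2)) (x : Char2 g) :
    epsLinearPart σ x = charParity (σᵀ⁻¹ *ᵥ x) + charParity x := by
  obtain ⟨A, B, C, D, rfl⟩ := exists_eq_fromBlocks σ
  obtain ⟨a, b, rfl⟩ := exists_eq_sum_elim x
  have h : Dᵀ * A + Bᵀ * C = 1 := by
    simpa using congrArg transpose (fromBlocks_mem_symplecticGroup_iff_of_charTwo.1 hσ).2.2
  have hBD : (D *ᵥ a) ⬝ᵥ (B *ᵥ a) = quadF (Bᵀ * D) a := by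
    rw [mulVec_dotProduct_mulVec, ← quadF_transpose, transpose_mul, transpose_transpose, quadF]
  have hAC : (C *ᵥ b) ⬝ᵥ (A *ᵥ b) = quadF (Aᵀ * C) b := by
    rw [mulVec_dotProduct_mulVec, ← quadF_transpose, transpose_mul, transpose_transpose, quadF]
  have hcross : (D *ᵥ a) ⬝ᵥ (A *ᵥ b) + (C *ᵥ b) ⬝ᵥ (B *ᵥ a) = a ⬝ᵥ b := by
    rw [dotProduct_comm (C *ᵥ b), mulVec_dotProduct_mulVec, mulVec_dotProduct_mulVec,
      ← dotProduct_add, ← add_mulVec, h, one_mulVec]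
  rw [inv_transpose_fromBlocks_of_charTwo hσ, fromBlocks_mulVec]
  simp only [epsLinearPart, charParity, aPart_elim, bPart_elim, toBlocks_fromBlocks₁₁,
    toBlocks_fromBlocks₁₂, toBlocks_fromBlocks₂₁, toBlocks_fromBlocks₂₂, Sum.elim_comp_inl,
    Sum.elim_comp_inr, add_dotProduct, dotProduct_add]
  linear_combination -(hBD + hAC + hcross) - CharTwo.add_self_eq_zero (a ⬝ᵥ b)

theorem epsLinearPart_mul (hσ : σ ∈ symplecticGroup (Fin g) (ZMod 2))
    (hτ : τ ∈ symplecticGroup (Fin g) (ZMod 2)) (x : Char2 g) :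
    epsLinearPart (σ * τ) x = epsLinearPart σ (τᵀ⁻¹ *ᵥ x) + epsLinearPart τ x := by
  rw [epsLinearPart_eq_charParity (Submonoid.mul_mem _ hσ hτ), epsLinearPart_eq_charParity hσ,
    epsLinearPart_eq_charParity hτ, transpose_mul, Matrix.mul_inv_rev, ← mulVec_mulVec]
  linear_combination -CharTwo.add_self_eq_zero (charParity (τᵀ⁻¹ *ᵥ x))

theorem epsLinearPart_eq_diag_dotProduct (hσ : σ ∈ symplecticGroup (Fin g) (ZMod 2))
    (x : Char2 g) :
    epsLinearPart σ x = diag (σ.toBlocks₁₂ᵀ * σ.toBlocks₂₂) ⬝ᵥ aPart x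
      + diag (σ.toBlocks₁₁ᵀ * σ.toBlocks₂₁) ⬝ᵥ bPart x := by
  rw [← fromBlocks_toBlocks σ, fromBlocks_mem_symplecticGroup_iff_of_charTwo] at hσ
  rw [epsLinearPart, quadF_of_isSymm hσ.2.1, quadF_of_isSymm hσ.1]

theorem epsLinearPart_add (hσ : σ ∈ symplecticGroup (Fin g) (ZMod 2)) (x y : Char2 g) :
    epsLinearPart σ (x + y) = epsLinearPart σ x + epsLinearPart σ y := by
  simp only [epsLinearPart_eq_diag_dotProduct hσ]
  change _ ⬝ᵥ (aPart x + aPart y) + _ ⬝ᵥ (bPart x + bPart y) = _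
  rw [dotProduct_add, dotProduct_add]
  ring

theorem trace_toBlocks_mul (hσ : σ ∈ symplecticGroup (Fin g) (ZMod 2))
    (hτ : τ ∈ symplecticGroup (Fin g) (ZMod 2)) :
    trace ((σ * τ).toBlocks₁₂ᵀ * (σ * τ).toBlocks₂₁) = trace (σ.toBlocks₁₂ᵀ * σ.toBlocks₂₁)
      + trace (τ.toBlocks₁₂ᵀ * τ.toBlocks₂₁) + epsLinearPart σ (offVec τ) := by
  obtain ⟨A, B, C, D, rfl⟩ := exists_eq_fromBlocks σ
  obtain ⟨A₁, B₁, C₁, D₁, rfl⟩ := exists_eq_fromBlocks τ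
  obtain ⟨hAC, hBD, h⟩ := fromBlocks_mem_symplecticGroup_iff_of_charTwo.1 hσ
  obtain ⟨hAB₁, hCD₁, h₁⟩ := fromBlocks_mem_symplecticGroup_iff_of_charTwo'.1 hτ
  rw [epsLinearPart_eq_diag_dotProduct hσ, fromBlocks_multiply]
  simp only [toBlocks_fromBlocks₁₁, toBlocks_fromBlocks₁₂, toBlocks_fromBlocks₂₁,
    toBlocks_fromBlocks₂₂, offVec, aPart_elim, bPart_elim]
  rw [trace_transpose_mul_add_mul_of_charTwo h h₁,
    trace_mul_eq_diag_dotProduct_of_charTwo hAC hAB₁,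
    trace_mul_eq_diag_dotProduct_of_charTwo hBD hCD₁]
  ring

theorem epsChar_mul (hσ : σ ∈ symplecticGroup (Fin g) (ZMod 2))
    (hτ : τ ∈ symplecticGroup (Fin g) (ZMod 2)) (m : Char2 g) :
    epsChar m (σ * τ) = epsChar (affAct τ m) σ * epsChar m τ := by
  rw [epsChar_eq_sgn2, epsChar_eq_sgn2, epsChar_eq_sgn2, ← sgn2_add, trace_toBlocks_mul hσ hτ,
    epsLinearPart_mul hσ hτ, affAct, epsLinearPart_add hσ]
  congr 1
  ring

variable {u w : Fin g → ZMod 2} {m : Char2 g}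

theorem offVec_symplecticTransvection (u w : Fin g → ZMod 2) :
    offVec (symplecticTransvection u w) = Sum.elim ((1 + u ⬝ᵥ w) • w) ((1 + u ⬝ᵥ w) • u) := by
  simp only [offVec, symplecticTransvection, toBlocks_fromBlocks₁₁, toBlocks_fromBlocks₁₂,
    toBlocks_fromBlocks₂₁, toBlocks_fromBlocks₂₂, transpose_add, transpose_one,
    transpose_vecMulVec, Matrix.add_mul, Matrix.mul_add, Matrix.one_mul, Matrix.mul_one,
    vecMulVec_mul_vecMulVec, vecMulVec_smul, diag_add, diag_smul, diag_vecMulVec]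
  have hu : u * u = u := funext fun i => ZMod.mul_self_eq_self_mod_two (u i)
  have hw : w * w = w := funext fun i => ZMod.mul_self_eq_self_mod_two (w i)
  rw [hu, hw, dotProduct_comm w u, add_smul, one_smul, add_smul, one_smul]

theorem affAct_symplecticTransvection (h : u ⬝ᵥ aPart m + w ⬝ᵥ bPart m + u ⬝ᵥ w = 1) :
    affAct (symplecticTransvection u w) m = m := by
  obtain ⟨a, b, rfl⟩ := exists_eq_sum_elim m
  rw [aPart_elim, bPart_elim] at h
  have hcoef : u ⬝ᵥ a + w ⬝ᵥ b + (1 + u ⬝ᵥ w) = 0 := by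
    linear_combination h + CharTwo.add_self_eq_zero (1 : ZMod 2)
  rw [affAct, inv_transpose_symplecticTransvection, symplecticTransvection_mulVec_elim,
    offVec_symplecticTransvection, ← Sum.elim_add_add, add_assoc, add_assoc, ← add_smul,
    ← add_smul, hcoef, zero_smul, zero_smul, add_zero, add_zero]

theorem epsChar_symplecticTransvection (h : u ⬝ᵥ aPart m + w ⬝ᵥ bPart m + u ⬝ᵥ w = 1) :
    epsChar m (symplecticTransvection u w) = -1 := by
  simp only [epsChar, symplecticTransvection, toBlocks_fromBlocks₁₁, toBlocks_fromBlocks₁₂,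
    toBlocks_fromBlocks₂₁, toBlocks_fromBlocks₂₂, transpose_add, transpose_one,
    transpose_vecMulVec, Matrix.add_mul, Matrix.mul_add, Matrix.one_mul, Matrix.mul_one,
    vecMulVec_mul_vecMulVec, vecMulVec_smul, quadF, add_mulVec, smul_mulVec, vecMulVec_mulVec,
    op_smul_eq_smul, dotProduct_add, dotProduct_smul, smul_eq_mul]
  rw [trace_smul, trace_vecMulVec, smul_eq_mul, dotProduct_comm (aPart m),
    dotProduct_comm (bPart m)]
  generalize u ⬝ᵥ aPart m = α at h ⊢
  generalize w ⬝ᵥ bPart m = β at h ⊢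
  generalize u ⬝ᵥ w = p at h ⊢
  revert α β p
  decide

theorem exists_symplecticTransvection_fixing (hg : 1 ≤ g) (m : Char2 g) :
    ∃ u w : Fin g → ZMod 2, u ⬝ᵥ aPart m + w ⬝ᵥ bPart m + u ⬝ᵥ w = 1 := by
  let i : Fin g := ⟨0, hg⟩
  have hcases : ∀ x y : ZMod 2, x = 1 ∨ y = 1 ∨ x + y + 1 = 1 := by decide
  rcases hcases (aPart m i) (bPart m i) with ha | hb | hab
  · exact ⟨Pi.single i 1, 0, by simpa [single_dotProduct] using ha⟩
  · exact ⟨0, Pi.single i 1, by simpa [single_dotProduct] using hb⟩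
  · exact ⟨Pi.single i 1, Pi.single i 1, by simpa [single_dotProduct] using hab⟩

end Characteristics

/-- for fixed `m`, the restriction of `ε_m` to the stabilizer
`H(m)` is a group homomorphism with values in `{±1}`, and it is non-trivial. -/
theorem eps_is_nontrivial_character_on_stabilizer (g : ℕ) (hg : 1 ≤ g) (m : Char2 g) :
    (∀ σ τ : SpMat g, σ ∈ Matrix.symplecticGroup (Fin g) (ZMod 2) →
      τ ∈ Matrix.symplecticGroup (Fin g) (ZMod 2) →
      affAct σ m = m → affAct τ m = m →
      epsChar m (σ * τ) = epsChar m σ * epsChar m τ) ∧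
    (∀ σ : SpMat g, σ ∈ Matrix.symplecticGroup (Fin g) (ZMod 2) →
      affAct σ m = m → epsChar m σ = 1 ∨ epsChar m σ = -1) ∧
    (∃ σ : SpMat g, σ ∈ Matrix.symplecticGroup (Fin g) (ZMod 2) ∧
      affAct σ m = m ∧ epsChar m σ = -1) := by
  refine ⟨fun σ τ hσ hτ _ hτm => by rw [epsChar_mul hσ hτ, hτm],
    fun σ _ _ => sgn2_eq_one_or_eq_neg_one _, ?_⟩
  obtain ⟨u, w, h⟩ := exists_symplecticTransvection_fixing hg m
  exact ⟨symplecticTransvection u w, symplecticTransvection_mem u w,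
    affAct_symplecticTransvection h, epsChar_symplecticTransvection h⟩
end

section
/- For any sigma in Sp(g, F_2) and characteristics m, n, the symplectic pairing sign satisfies e(sigma{m}, sigma{n}) = e(m, n) * epsilon_m(sigma) * epsilon_n(sigma), where e(m,n) = (-1)^{<m,n>} with <m,n> = a'beta + b'alpha for m = (a;b), n = (alpha;beta). -/
open Matrix BigOperators

section AuxLemmas

lemma z2_mul_self : ∀ x : ZMod 2, x * x = x := by decide

lemma z2_sgn_aux : ∀ x y : ZMod 2,
    (if x + y = 0 then (1:ℤ) else -1)
      = (if x = 0 then (1:ℤ) else -1) * (if y = 0 then (1:ℤ) else -1) := by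
  decide

lemma mat_neg {α β : Type*} (M : Matrix α β (ZMod 2)) : -M = M := by
  ext i j; exact CharTwo.neg_eq _

lemma mat_add_self {α β : Type*} (M : Matrix α β (ZMod 2)) : M + M = 0 := by
  ext i j; exact CharTwo.add_self_eq_zero _

lemma mat_eq_of_add_eq_zero {α β : Type*} {M N : Matrix α β (ZMod 2)} (h : M + N = 0) : M = N := by
  have hz : ∀ x y : ZMod 2, x + y = 0 → x = y := by decide
  ext i j
  exact hz _ _ (congrFun (congrFun h i) j)

lemma dot_mv {n : ℕ} (M N : Matrix (Fin n) (Fin n) (ZMod 2)) (x y : Fin n → ZMod 2) :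
    (M *ᵥ x) ⬝ᵥ (N *ᵥ y) = x ⬝ᵥ ((Mᵀ * N) *ᵥ y) := by
  rw [← mulVec_mulVec, dotProduct_mulVec x, vecMul_transpose]

lemma dot_tr {n : ℕ} (X : Matrix (Fin n) (Fin n) (ZMod 2)) (x y : Fin n → ZMod 2) :
    x ⬝ᵥ (X *ᵥ y) = y ⬝ᵥ (Xᵀ *ᵥ x) := by
  rw [dotProduct_mulVec, dotProduct_comm, mulVec_transpose]

lemma quad_symm_s6 {n : ℕ} (S : Matrix (Fin n) (Fin n) (ZMod 2)) (hS : Sᵀ = S) (x : Fin n → ZMod 2) :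
    x ⬝ᵥ (S *ᵥ x) = x ⬝ᵥ S.diag := by
  classical
  have key : ∀ i j : Fin n, x i * (S i j * x j) = x j * (S j i * x i) := by
    intro i j
    have h : S i j = S j i := by nth_rewrite 1 [← hS]; rw [transpose_apply]
    rw [h]; ring
  simp only [dotProduct, mulVec, Matrix.diag, Finset.mul_sum]
  rw [← Finset.sum_product']
  rw [← Finset.sum_filter_add_sum_filter_not (Finset.univ ×ˢ Finset.univ) (fun p => p.1 = p.2)]
  have h1 : (∑ p ∈ (Finset.univ ×ˢ Finset.univ).filter (fun p : Fin n × Fin n => p.1 = p.2),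
      x p.1 * (S p.1 p.2 * x p.2)) = ∑ i, x i * S i i := by
    rw [Finset.sum_filter, Finset.sum_product]
    simp only [Finset.sum_ite_eq, Finset.mem_univ, if_true]
    congr 1; ext i
    rw [← mul_assoc, mul_comm (x i) (S i i), mul_assoc, z2_mul_self]
  have h2 : (∑ p ∈ (Finset.univ ×ˢ Finset.univ).filter (fun p : Fin n × Fin n => ¬ p.1 = p.2),
      x p.1 * (S p.1 p.2 * x p.2)) = 0 := by
    apply Finset.sum_involution (fun p _ => Prod.swap p)
    · intro p hp
      rw [key]
      exact CharTwo.add_self_eq_zero _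
    · intro p hp h hc
      simp only [Finset.mem_filter] at hp
      exact hp.2 ((congrArg Prod.fst hc).symm)
    · intro p hp
      simp only [Finset.mem_filter, Finset.mem_product, Finset.mem_univ, true_and] at hp ⊢
      exact fun h => hp h.symm
    · intro p hp; rfl
  rw [h1, h2, add_zero]

end AuxLemmas


/-- `e(σ{m}, σ{n}) = e(m,n) ε_m(σ) ε_n(σ)`. -/
theorem pairing_sign_transformation (g : ℕ) (σ : SpMat g)
    (hσ : σ ∈ Matrix.symplecticGroup (Fin g) (ZMod 2)) (m n : Char2 g) :
    eSign (affAct σ m) (affAct σ n) = eSign m n * epsChar m σ * epsChar n σ := by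
  suffices hmain : pairing (affAct σ m) (affAct σ n) = pairing m n
      + (Matrix.trace ((σ.toBlocks₁₂)ᵀ * σ.toBlocks₂₁)
          + quadF ((σ.toBlocks₁₂)ᵀ * σ.toBlocks₂₂) (aPart m)
          + quadF ((σ.toBlocks₁₁)ᵀ * σ.toBlocks₂₁) (bPart m))
      + (Matrix.trace ((σ.toBlocks₁₂)ᵀ * σ.toBlocks₂₁)
          + quadF ((σ.toBlocks₁₂)ᵀ * σ.toBlocks₂₂) (aPart n)
          + quadF ((σ.toBlocks₁₁)ᵀ * σ.toBlocks₂₁) (bPart n)) by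
    simp only [eSign, epsChar, sgn2]
    rw [hmain, z2_sgn_aux, z2_sgn_aux]
  set A := σ.toBlocks₁₁ with hA
  set B := σ.toBlocks₁₂ with hB
  set C := σ.toBlocks₂₁ with hC
  set D := σ.toBlocks₂₂ with hD
  have hσb : σ = Matrix.fromBlocks A B C D := (Matrix.fromBlocks_toBlocks σ).symm
  have hJ : Matrix.J (Fin g) (ZMod 2) = Matrix.fromBlocks 0 1 1 0 := by
    rw [Matrix.J, mat_neg (1 : Matrix (Fin g) (Fin g) (ZMod 2))]
  have h1 := SymplecticGroup.mem_iff.mp hσ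
  rw [hσb, hJ, Matrix.fromBlocks_transpose, Matrix.fromBlocks_multiply,
    Matrix.fromBlocks_multiply] at h1
  have h2 := SymplecticGroup.mem_iff'.mp hσ
  rw [hσb, hJ, Matrix.fromBlocks_transpose, Matrix.fromBlocks_multiply,
    Matrix.fromBlocks_multiply] at h2
  have hABt : B * Aᵀ + A * Bᵀ = 0 := by simpa using congrArg Matrix.toBlocks₁₁ h1
  have hCDt : D * Cᵀ + C * Dᵀ = 0 := by simpa using congrArg Matrix.toBlocks₂₂ h1
  have hACz : Cᵀ * A + Aᵀ * C = 0 := by simpa using congrArg Matrix.toBlocks₁₁ h2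
  have hAD : Cᵀ * B + Aᵀ * D = 1 := by simpa using congrArg Matrix.toBlocks₁₂ h2
  have hBDz : Dᵀ * B + Bᵀ * D = 0 := by simpa using congrArg Matrix.toBlocks₂₂ h2
  have hABs : B * Aᵀ = A * Bᵀ := mat_eq_of_add_eq_zero hABt
  have hCDs : D * Cᵀ = C * Dᵀ := mat_eq_of_add_eq_zero hCDt
  have hACs : Cᵀ * A = Aᵀ * C := mat_eq_of_add_eq_zero hACz
  have hBDs : Dᵀ * B = Bᵀ * D := mat_eq_of_add_eq_zero hBDz
  have hDA : Dᵀ * A + Bᵀ * C = 1 := by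
    have h := congrArg Matrix.transpose hAD
    rw [Matrix.transpose_add, Matrix.transpose_mul, Matrix.transpose_mul,
      Matrix.transpose_transpose, Matrix.transpose_transpose, Matrix.transpose_one] at h
    rw [add_comm] at h
    exact h
  have hDA' : Dᵀ * A = 1 + Bᵀ * C := by
    rw [← hDA, add_assoc, mat_add_self, add_zero]
  have hABsym : (A * Bᵀ)ᵀ = A * Bᵀ := by
    rw [Matrix.transpose_mul, Matrix.transpose_transpose]; exact hABs
  have hCDsym : (C * Dᵀ)ᵀ = C * Dᵀ := by
    rw [Matrix.transpose_mul, Matrix.transpose_transpose]; exact hCDs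
  have hTmem : σᵀ ∈ Matrix.symplecticGroup (Fin g) (ZMod 2) := SymplecticGroup.transpose_mem hσ
  have hinv : (σᵀ)⁻¹ = Matrix.fromBlocks D C B A := by
    rw [SymplecticGroup.inv_eq_symplectic_inv _ hTmem, Matrix.transpose_transpose, hσb, hJ,
      mat_neg, Matrix.fromBlocks_multiply, Matrix.fromBlocks_multiply]
    simp
  set d1 := Matrix.diag (C * Dᵀ) with hd1
  set d2 := Matrix.diag (A * Bᵀ) with hd2
  have haff : ∀ p : Char2 g, affAct σ p =
      Sum.elim (D *ᵥ aPart p + C *ᵥ bPart p + d1) (B *ᵥ aPart p + A *ᵥ bPart p + d2) := by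
    intro p
    unfold affAct offVec
    rw [hinv, Matrix.fromBlocks_mulVec]
    funext x
    cases x <;> rfl
  have haP : ∀ p : Char2 g, aPart (affAct σ p) = D *ᵥ aPart p + C *ᵥ bPart p + d1 := by
    intro p; funext i; rw [haff p]; rfl
  have hbP : ∀ p : Char2 g, bPart (affAct σ p) = B *ᵥ aPart p + A *ᵥ bPart p + d2 := by
    intro p; funext i; rw [haff p]; rfl
  have L1 : ∀ x y : Fin g → ZMod 2, (D *ᵥ x) ⬝ᵥ (B *ᵥ y) + (B *ᵥ x) ⬝ᵥ (D *ᵥ y) = 0 := by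
    intro x y
    rw [dot_mv, dot_mv, ← dotProduct_add, ← Matrix.add_mulVec, hBDz, Matrix.zero_mulVec,
      dotProduct_zero]
  have L2 : ∀ x y : Fin g → ZMod 2, (C *ᵥ x) ⬝ᵥ (A *ᵥ y) + (A *ᵥ x) ⬝ᵥ (C *ᵥ y) = 0 := by
    intro x y
    rw [dot_mv, dot_mv, ← dotProduct_add, ← Matrix.add_mulVec, hACz, Matrix.zero_mulVec,
      dotProduct_zero]
  have L3 : ∀ x y : Fin g → ZMod 2, (D *ᵥ x) ⬝ᵥ (A *ᵥ y) + (B *ᵥ x) ⬝ᵥ (C *ᵥ y) = x ⬝ᵥ y := by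
    intro x y
    rw [dot_mv, dot_mv, ← dotProduct_add, ← Matrix.add_mulVec, hDA, Matrix.one_mulVec]
  have L4 : ∀ x y : Fin g → ZMod 2, (C *ᵥ x) ⬝ᵥ (B *ᵥ y) + (A *ᵥ x) ⬝ᵥ (D *ᵥ y) = x ⬝ᵥ y := by
    intro x y
    rw [dot_mv, dot_mv, ← dotProduct_add, ← Matrix.add_mulVec, hAD, Matrix.one_mulVec]
  have L5 : ∀ x : Fin g → ZMod 2,
      (D *ᵥ x) ⬝ᵥ d2 + (B *ᵥ x) ⬝ᵥ d1 = x ⬝ᵥ ((Bᵀ * D) *ᵥ x) := by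
    intro x
    rw [hd1, hd2, ← quad_symm_s6 _ hABsym (D *ᵥ x), ← quad_symm_s6 _ hCDsym (B *ᵥ x),
      dot_mv, dot_mv, Matrix.mulVec_mulVec, Matrix.mulVec_mulVec,
      ← dotProduct_add, ← Matrix.add_mulVec]
    have e1 : Dᵀ * (A * Bᵀ) * D = Bᵀ * D + Bᵀ * C * (Bᵀ * D) := by
      have h' : Dᵀ * (A * Bᵀ) * D = (Dᵀ * A) * (Bᵀ * D) := by noncomm_ring
      rw [h', hDA', add_mul, one_mul]
    have e2 : Bᵀ * (C * Dᵀ) * B = (Bᵀ * C * (Bᵀ * D))ᵀ := by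
      have h' : (Bᵀ * C * (Bᵀ * D))ᵀ = (Dᵀ * B) * (Cᵀ * B) := by
        simp only [Matrix.transpose_mul, Matrix.transpose_transpose]
      rw [h', hBDs, ← hCDs]
      noncomm_ring
    have hmat : Dᵀ * (A * Bᵀ) * D + Bᵀ * (C * Dᵀ) * B
        = Bᵀ * D + (Bᵀ * C * (Bᵀ * D) + (Bᵀ * C * (Bᵀ * D))ᵀ) := by
      rw [e1, e2, add_assoc]
    rw [hmat, Matrix.add_mulVec, dotProduct_add, Matrix.add_mulVec, dotProduct_add]
    have hflip := dot_tr (Bᵀ * C * (Bᵀ * D)) x x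
    rw [← hflip, CharTwo.add_self_eq_zero, add_zero]
  have L6 : ∀ x : Fin g → ZMod 2,
      (C *ᵥ x) ⬝ᵥ d2 + (A *ᵥ x) ⬝ᵥ d1 = x ⬝ᵥ ((Aᵀ * C) *ᵥ x) := by
    intro x
    rw [hd1, hd2, ← quad_symm_s6 _ hABsym (C *ᵥ x), ← quad_symm_s6 _ hCDsym (A *ᵥ x),
      dot_mv, dot_mv, Matrix.mulVec_mulVec, Matrix.mulVec_mulVec,
      ← dotProduct_add, ← Matrix.add_mulVec]
    have e1 : Aᵀ * (C * Dᵀ) * A = Aᵀ * C + Aᵀ * C * (Bᵀ * C) := by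
      have h' : Aᵀ * (C * Dᵀ) * A = (Aᵀ * C) * (Dᵀ * A) := by noncomm_ring
      rw [h', hDA', mul_add, mul_one]
    have e2 : Cᵀ * (A * Bᵀ) * C = (Aᵀ * C * (Bᵀ * C))ᵀ := by
      have h' : (Aᵀ * C * (Bᵀ * C))ᵀ = (Cᵀ * B) * (Cᵀ * A) := by
        simp only [Matrix.transpose_mul, Matrix.transpose_transpose]
      rw [h', hACs, ← hABs]
      noncomm_ring
    have hmat : Cᵀ * (A * Bᵀ) * C + Aᵀ * (C * Dᵀ) * A
        = Aᵀ * C + (Aᵀ * C * (Bᵀ * C) + (Aᵀ * C * (Bᵀ * C))ᵀ) := by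
      rw [e1, e2]
      abel
    rw [hmat, Matrix.add_mulVec, dotProduct_add, Matrix.add_mulVec, dotProduct_add]
    have hflip := dot_tr (Aᵀ * C * (Bᵀ * C)) x x
    rw [← hflip, CharTwo.add_self_eq_zero, add_zero]
  have c1 : d1 ⬝ᵥ (B *ᵥ aPart n) = (B *ᵥ aPart n) ⬝ᵥ d1 := dotProduct_comm _ _
  have c2 : d2 ⬝ᵥ (D *ᵥ aPart n) = (D *ᵥ aPart n) ⬝ᵥ d2 := dotProduct_comm _ _
  have c3 : d1 ⬝ᵥ (A *ᵥ bPart n) = (A *ᵥ bPart n) ⬝ᵥ d1 := dotProduct_comm _ _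
  have c4 : d2 ⬝ᵥ (C *ᵥ bPart n) = (C *ᵥ bPart n) ⬝ᵥ d2 := dotProduct_comm _ _
  have h7 : d1 ⬝ᵥ d2 + d2 ⬝ᵥ d1 = 0 := by
    rw [dotProduct_comm d1 d2]
    exact CharTwo.add_self_eq_zero _
  have htr : Matrix.trace (Bᵀ * C) + Matrix.trace (Bᵀ * C) = 0 := CharTwo.add_self_eq_zero _
  simp only [pairing, quadF]
  rw [haP m, hbP m, haP n, hbP n]
  simp only [add_dotProduct, dotProduct_add]
  linear_combination (L1 (aPart m) (aPart n)) + (L3 (aPart m) (bPart n))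
    + (L4 (bPart m) (aPart n)) + (L2 (bPart m) (bPart n))
    + (L5 (aPart m)) + (L6 (bPart m)) + (L5 (aPart n)) + (L6 (bPart n))
    + c1 + c2 + c3 + c4 + h7 - htr
end
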